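/- Let c be a child sequence of length n with a = (sum_i c_i^2)/n, C a uniformly random rearrangement of c, and S_i = sum_{j≤i}(C_j - 1). Then for all t ≥ 0, P(min_{0 ≤ i ≤ ⌊n/2⌋} S_i ≤ -(t+1)) ≤ exp(-t^2 / (8(3+2a)n + 8t/3)). -/

import Mathlib

/-- Partial sum `S_k = ∑_{i=1}^k (c_i - 1)` of a length-`n` sequence (0-indexed). -/
def pS {n : ℕ} (c : Fin n → ℕ) (k : ℕ) : ℤ :=
  ∑ i : Fin n, if (i : ℕ) < k then (c i : ℤ) - 1 else 0

/-- Cyclic shift of a sequence by `j`. -/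
def cshift {n : ℕ} (j : Fin n) (c : Fin n → ℕ) : Fin n → ℕ := fun i => c (i + j)

/-- A tree sequence: partial sums are nonnegative before index `n`
(equivalently, the queue `S_i + 1` stays strictly positive for `i < n`). -/
def IsTreeSeq {n : ℕ} (c : Fin n → ℕ) : Prop := ∀ k < n, 0 ≤ pS c k

/-!
Given the first `i` entries, `S_i + 1 = (n - i) - (sum of the unrevealed entries)`, so
`M_i = (S_i + 1) / (n - i)` is one minus the mean of the unrevealed entries. Revealing one more
entry is a uniform draw from them, which makes `M` a martingale with `M_i - M_{i+1} ≤ 4 / n` and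
conditional second moment at most `∑ c_j² / ((n - i - 1)² (n - i)) ≤ 8 a / n² =: β` while
`i < n / 2`. With `e^y ≤ 1 + y + y²` for `y ≤ 1`, `exp (-λ M_i - λ² β i)` is then a
supermartingale for `0 ≤ λ ≤ n / 4`. Now `S_i ≤ -(t + 1)` forces `M_i ≤ -t / n`; stopping at the
first such time and applying Markov's inequality with `λ = t / (8 a)` (admissible, since the
event is empty unless `t + 1 ≤ n / 2`) bounds the probability by `exp (-t² / (16 a n))`.

Expectations are sums over `Perm (Fin n)`; conditioning on the first `i` entries of `τ` is realised
by averaging over the right translates `τ * swap i k`, `k ≥ i`.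
-/

open Finset Real MeasureTheory Equiv
open scoped Nat

lemma Real.exp_le_one_add_add_sq {y : ℝ} (hy : y ≤ 1) : exp y ≤ 1 + y + y ^ 2 := by
  rcases le_or_gt y (-1) with hy' | hy'
  · nlinarith [exp_le_one_iff.mpr (hy'.trans (by norm_num : (-1 : ℝ) ≤ 0))]
  · have := (abs_le.mp (abs_exp_sub_one_sub_id_le (abs_le.mpr ⟨hy'.le, hy⟩))).2
    linarith

lemma Finset.sum_exp_mul_mean_sub_le {ι : Type*} (K : Finset ι) (w : ι → ℝ) {lam : ℝ}
    (hw : ∀ k ∈ K, 0 ≤ w k) (hlam : 0 ≤ lam) (hmean : lam * ((∑ k ∈ K, w k) / #K) ≤ 1) :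
    ∑ k ∈ K, exp (lam * ((∑ j ∈ K, w j) / #K - w k)) ≤
      #K * exp (lam ^ 2 * ((∑ k ∈ K, w k ^ 2) / #K)) := by
  rcases K.eq_empty_or_nonempty with rfl | hK
  · simp
  have hcard : (0 : ℝ) < #K := by exact_mod_cast hK.card_pos
  set μ := (∑ j ∈ K, w j) / #K with hμ
  have hcentered : ∑ k ∈ K, (μ - w k) = 0 := by
    rw [sum_sub_distrib, sum_const, nsmul_eq_mul, hμ, mul_div_cancel₀ _ hcard.ne', sub_self]
  have hvar : ∑ k ∈ K, (μ - w k) ^ 2 ≤ ∑ k ∈ K, w k ^ 2 := by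
    have hsq (k : ι) : (μ - w k) ^ 2 = w k ^ 2 - μ ^ 2 + 2 * μ * (μ - w k) := by ring
    rw [sum_congr rfl fun k _ => hsq k, sum_add_distrib, sum_sub_distrib, ← mul_sum, hcentered,
      sum_const, nsmul_eq_mul]
    nlinarith [sq_nonneg μ]
  calc ∑ k ∈ K, exp (lam * (μ - w k))
      ≤ ∑ k ∈ K, (1 + lam * (μ - w k) + (lam * (μ - w k)) ^ 2) :=
        sum_le_sum fun k hk => exp_le_one_add_add_sq (by nlinarith [hw k hk])
    _ = #K + lam ^ 2 * ∑ k ∈ K, (μ - w k) ^ 2 := by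
        simp only [sum_add_distrib, ← mul_sum, mul_pow, hcentered]; simp
    _ ≤ #K * (1 + lam ^ 2 * ((∑ k ∈ K, w k ^ 2) / #K)) := by
        rw [mul_add, mul_one, mul_left_comm, mul_div_cancel₀ _ hcard.ne']
        gcongr
    _ ≤ _ := by gcongr; linarith [add_one_le_exp (lam ^ 2 * ((∑ k ∈ K, w k ^ 2) / #K))]

lemma Finset.sum_le_sum_of_sum_mul_le {G ι : Type*} [Group G] [Fintype G] {K : Finset ι}
    (hK : K.Nonempty) (g : ι → G) {f h : G → ℝ}
    (hfh : ∀ x, ∑ k ∈ K, f (x * g k) ≤ #K * h x) : ∑ x, f x ≤ ∑ x, h x := by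
  have hcard : (0 : ℝ) < #K := by exact_mod_cast hK.card_pos
  have htranslate (k : ι) : ∑ x, f (x * g k) = ∑ x, f x :=
    Equiv.sum_comp (Equiv.mulRight (g k)) f
  refine le_of_mul_le_mul_left ?_ hcard
  calc (#K : ℝ) * ∑ x, f x = ∑ k ∈ K, ∑ x, f (x * g k) := by
        rw [sum_congr rfl fun k _ => htranslate k, sum_const, nsmul_eq_mul]
    _ = ∑ x, ∑ k ∈ K, f (x * g k) := sum_comm
    _ ≤ ∑ x, #K * h x := sum_le_sum fun x _ => hfh x
    _ = #K * ∑ x, h x := (mul_sum _ _ _).symm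

lemma MeasureTheory.stoppedProcess_succ {Ω β : Type*} [AddCommGroup β] (u : ℕ → Ω → β)
    (τ : Ω → WithTop ℕ) (i : ℕ) (ω : Ω) :
    stoppedProcess u τ (i + 1) ω =
      stoppedProcess u τ i ω + if τ ω ≤ i then 0 else u (i + 1) ω - u i ω := by
  split_ifs with h
  · rw [stoppedProcess_eq_of_ge (i := i) h,
      stoppedProcess_eq_of_ge (i := i + 1) (h.trans (WithTop.coe_le_coe.mpr i.le_succ)), add_zero]
  · have hlt : (i : WithTop ℕ) < τ ω := not_le.mp h
    rw [stoppedProcess_eq_of_le (i := i + 1) (ENat.natCast_add_one_le_iff.mpr hlt),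
      stoppedProcess_eq_of_le (i := i) hlt.le]
    exact (add_sub_cancel _ _).symm

section PartialSums

variable {n : ℕ}

lemma pS_zero (c : Fin n → ℕ) : pS c 0 = 0 := by
  simp [pS]

lemma pS_congr {c c' : Fin n → ℕ} {k : ℕ} (h : ∀ x : Fin n, (x : ℕ) < k → c x = c' x) :
    pS c k = pS c' k :=
  sum_congr rfl fun x _ => by split_ifs with hx <;> simp [h x, hx]

lemma pS_succ (c : Fin n → ℕ) (a : Fin n) : pS c (a + 1) = pS c a + ((c a : ℤ) - 1) := by
  simp only [pS, Nat.lt_succ_iff_lt_or_eq, Fin.val_inj]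
  rw [← Fintype.sum_ite_eq' a fun x => (c x : ℤ) - 1, ← sum_add_distrib]
  refine sum_congr rfl fun x _ => ?_
  by_cases hxa : x = a <;> simp [hxa]

lemma neg_le_pS (c : Fin n → ℕ) (k : ℕ) : -(k : ℤ) ≤ pS c k := by
  calc -(k : ℤ) ≤ -#{x : Fin n | (x : ℕ) < k} := by
        simp only [Fin.card_filter_val_lt, neg_le_neg_iff, Nat.cast_le]; exact min_le_right _ _
    _ = ∑ x : Fin n, if (x : ℕ) < k then (-1 : ℤ) else 0 := by simp [sum_ite]
    _ ≤ pS c k := sum_le_sum fun x _ => by split_ifs <;> omega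

lemma add_one_le_of_pS_le {c : Fin n → ℕ} {k : ℕ} {t : ℝ} (h : (pS c k : ℝ) ≤ -(t + 1)) :
    t + 1 ≤ k := by
  have : (-k : ℝ) ≤ pS c k := by exact_mod_cast neg_le_pS c k
  linarith

lemma pS_add_sum_Ici (c : Fin n → ℕ) (a : Fin n) :
    (pS c a : ℝ) + a + ∑ x ∈ Ici a, (c x : ℝ) = ∑ x, (c x : ℝ) := by
  have hIio : ({x | x < a} : Finset (Fin n)) = Iio a := by ext; simp
  have hIci : ({x | ¬ x < a} : Finset (Fin n)) = Ici a := by ext; simp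
  rw [← sum_filter_add_sum_filter_not univ (· < a), hIio, hIci, pS]
  push_cast
  simp only [Fin.val_fin_lt, ← sum_filter, hIio, sum_sub_distrib, sum_const, Fin.card_Iio]
  simp

lemma pS_comp_mul_swap (c : Fin n → ℕ) (τ : Perm (Fin n)) {a k : Fin n} (hk : a ≤ k) {j : ℕ}
    (hj : j ≤ a) : pS (c ∘ ⇑(τ * swap a k)) j = pS (c ∘ τ) j := by
  refine pS_congr fun x hx => ?_
  have hxa : x ≠ a := fun h => by omega
  have hxk : x ≠ k := fun h => by rw [Fin.le_def] at hk; omega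
  simp [swap_apply_of_ne_of_ne hxa hxk]

end PartialSums

section QueueRatio

variable {n : ℕ} (c : Fin n → ℕ)

lemma sum_cast_comp_perm (hc : ∑ x, c x = n - 1) (hn : 0 < n) (τ : Perm (Fin n)) :
    ∑ x, (c (τ x) : ℝ) = n - 1 := by
  rw [Equiv.sum_comp τ (fun x => (c x : ℝ)), ← Nat.cast_sum, hc, Nat.cast_sub hn, Nat.cast_one]

lemma sub_one_le_sum_sq (hc : ∑ x, c x = n - 1) (hn : 0 < n) :
    (n : ℝ) - 1 ≤ ∑ x, (c x : ℝ) ^ 2 := by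
  rw [← Nat.cast_one, ← Nat.cast_sub hn, ← hc, Nat.cast_sum]
  exact sum_le_sum fun x _ => by exact_mod_cast Nat.le_self_pow two_ne_zero (c x)

lemma half_le_sub_sub_one_of_lt_half {a : ℕ} (ha : a < n / 2) : (n : ℝ) / 2 ≤ n - a - 1 := by
  have : ((a + 1 : ℕ) : ℝ) ≤ n / 2 := (Nat.cast_le.mpr ha).trans Nat.cast_div_le
  push_cast at this
  linarith

lemma sum_Ici_div_card_le (hc : ∑ x, c x = n - 1) (τ : Perm (Fin n)) {a : Fin n}
    (ha : (a : ℕ) < n / 2) :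
    (∑ x ∈ Ici a, (c (τ x) : ℝ) / (n - a - 1)) / #(Ici a) ≤ 4 / n := by
  have hhalf := half_le_sub_sub_one_of_lt_half ha
  have hn : (0 : ℝ) < n := Nat.cast_pos.mpr a.pos
  have hsum : ∑ x ∈ Ici a, (c (τ x) : ℝ) ≤ n - 1 :=
    (sum_le_univ_sum_of_nonneg fun x => by positivity).trans_eq
      (sum_cast_comp_perm c hc a.pos τ)
  rw [Fin.card_Ici, Nat.cast_sub a.is_lt.le, ← sum_div, div_div,
    div_le_div_iff₀ (by nlinarith) hn]
  nlinarith

lemma sum_Ici_sq_div_card_le (τ : Perm (Fin n)) {a : Fin n} (ha : (a : ℕ) < n / 2) :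
    (∑ x ∈ Ici a, ((c (τ x) : ℝ) / (n - a - 1)) ^ 2) / #(Ici a) ≤
      8 * (∑ x, (c x : ℝ) ^ 2) / n ^ 3 := by
  have hhalf := half_le_sub_sub_one_of_lt_half ha
  have hsum : ∑ x ∈ Ici a, (c (τ x) : ℝ) ^ 2 ≤ ∑ x, (c x : ℝ) ^ 2 :=
    (sum_le_univ_sum_of_nonneg fun x => by positivity).trans_eq
      (Equiv.sum_comp τ fun x => (c x : ℝ) ^ 2)
  have hcube : (n : ℝ) ^ 3 ≤ 8 * ((n - a - 1) ^ 2 * (n - a)) := by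
    have := mul_le_mul (pow_le_pow_left₀ (by positivity) hhalf 2)
      (by linarith : (n : ℝ) / 2 ≤ n - a) (by positivity) (by positivity)
    linarith
  simp only [div_pow, ← sum_div, Fin.card_Ici, Nat.cast_sub a.is_lt.le, div_div]
  have hn : (0 : ℝ) < n := Nat.cast_pos.mpr a.pos
  rw [div_le_div_iff₀ (mul_pos (pow_pos (by linarith) 2) (by linarith)) (by positivity)]
  nlinarith [mul_le_mul hsum hcube (by positivity) (by positivity)]

noncomputable def queueRatio (i : ℕ) (τ : Perm (Fin n)) : ℝ :=
  ((pS (c ∘ τ) i : ℝ) + 1) / (n - i)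

lemma queueRatio_mul_swap (τ : Perm (Fin n)) {a k : Fin n} (hk : a ≤ k) {j : ℕ} (hj : j ≤ a) :
    queueRatio c j (τ * swap a k) = queueRatio c j τ := by
  rw [queueRatio, queueRatio, pS_comp_mul_swap c τ hk hj]

lemma queueRatio_succ_mul_swap (hc : ∑ x, c x = n - 1) (τ : Perm (Fin n)) {a k : Fin n}
    (hk : a ≤ k) (ha : (a : ℕ) + 1 < n) :
    queueRatio c (a + 1) (τ * swap a k) = queueRatio c a τ -
      ((∑ x ∈ Ici a, (c (τ x) : ℝ) / (n - a - 1)) / #(Ici a) - c (τ k) / (n - a - 1)) := by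
  have hsum := pS_add_sum_Ici (c ∘ τ) a
  simp only [Function.comp_apply, sum_cast_comp_perm c hc a.pos τ] at hsum
  have hnext : pS (c ∘ ⇑(τ * swap a k)) (a + 1) = pS (c ∘ τ) a + ((c (τ k) : ℤ) - 1) := by
    rw [pS_succ, pS_comp_mul_swap c τ hk le_rfl]; simp
  have ha' : ((a : ℕ) : ℝ) + 1 < n := by exact_mod_cast ha
  have hN1 : (n : ℝ) - a - 1 ≠ 0 := by linarith
  have hN0 : (n : ℝ) - a ≠ 0 := by linarith
  rw [queueRatio, queueRatio, hnext, Fin.card_Ici, Nat.cast_sub a.is_lt.le, ← sum_div]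
  push_cast
  rw [show (n : ℝ) - ((a : ℝ) + 1) = n - a - 1 by ring]
  field_simp
  linear_combination hsum

noncomputable def queueExp (lam beta : ℝ) (i : ℕ) (τ : Perm (Fin n)) : ℝ :=
  exp (-(lam * queueRatio c i τ) - lam ^ 2 * beta * i)

lemma sum_queueExp_succ_mul_swap_le (hc : ∑ x, c x = n - 1) {lam beta : ℝ} (hlam : 0 ≤ lam)
    (hjump : lam * (4 / n) ≤ 1) (hbeta : 8 * (∑ x, (c x : ℝ) ^ 2) / n ^ 3 ≤ beta)
    (τ : Perm (Fin n)) {a : Fin n} (ha : (a : ℕ) < n / 2) :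
    ∑ k ∈ Ici a, queueExp c lam beta (a + 1) (τ * swap a k) ≤
      #(Ici a) * queueExp c lam beta a τ := by
  set w : Fin n → ℝ := fun x => c (τ x) / (n - a - 1)
  set μ := (∑ x ∈ Ici a, w x) / #(Ici a)
  have hw : ∀ x ∈ Ici a, 0 ≤ w x := fun x _ => div_nonneg (by positivity)
    (by linarith [half_le_sub_sub_one_of_lt_half ha, n.cast_nonneg (α := ℝ)])
  have hmean : lam * μ ≤ 1 :=
    (mul_le_mul_of_nonneg_left (sum_Ici_div_card_le c hc τ ha) hlam).trans hjump
  have hstep (k : Fin n) (hk : k ∈ Ici a) : queueExp c lam beta (a + 1) (τ * swap a k) =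
      queueExp c lam beta a τ * exp (-(lam ^ 2 * beta)) * exp (lam * (μ - w k)) := by
    rw [queueExp, queueExp, queueRatio_succ_mul_swap c hc τ (mem_Ici.mp hk) (by omega),
      ← exp_add, ← exp_add]
    congr 1
    push_cast
    ring
  calc ∑ k ∈ Ici a, queueExp c lam beta (a + 1) (τ * swap a k)
      = queueExp c lam beta a τ * exp (-(lam ^ 2 * beta)) *
          ∑ k ∈ Ici a, exp (lam * (μ - w k)) := by
        rw [sum_congr rfl hstep, mul_sum]
    _ ≤ queueExp c lam beta a τ * exp (-(lam ^ 2 * beta)) *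
          (#(Ici a) * exp (lam ^ 2 * beta)) := by
        refine mul_le_mul_of_nonneg_left ?_ (mul_pos (exp_pos _) (exp_pos _)).le
        refine (sum_exp_mul_mean_sub_le _ w hw hlam hmean).trans ?_
        gcongr
        exact (sum_Ici_sq_div_card_le c τ ha).trans hbeta
    _ = #(Ici a) * queueExp c lam beta a τ := by
        rw [exp_neg]; field_simp

noncomputable def queueHit (s : ℝ) : Perm (Fin n) → WithTop ℕ :=
  hittingAfter (queueRatio c) (Set.Iic (-s)) 0

lemma queueHit_le_iff (s : ℝ) (τ : Perm (Fin n)) (i : ℕ) :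
    queueHit c s τ ≤ i ↔ ∃ j ≤ i, queueRatio c j τ ≤ -s := by
  rw [queueHit, Nat.cast_withTop, hittingAfter_le_iff]
  simp

lemma queueHit_mul_swap_le_iff (s : ℝ) (τ : Perm (Fin n)) {a k : Fin n} (hk : a ≤ k) :
    queueHit c s (τ * swap a k) ≤ (a : ℕ) ↔ queueHit c s τ ≤ (a : ℕ) := by
  rw [queueHit_le_iff, queueHit_le_iff]
  exact exists_congr fun j => and_congr_right fun hj => by rw [queueRatio_mul_swap c τ hk hj]

lemma sum_stoppedProcess_queueExp_succ_le (hc : ∑ x, c x = n - 1) {lam beta : ℝ} (hlam : 0 ≤ lam)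
    (hjump : lam * (4 / n) ≤ 1) (hbeta : 8 * (∑ x, (c x : ℝ) ^ 2) / n ^ 3 ≤ beta) (s : ℝ)
    {i : ℕ} (hi : i < n / 2) :
    ∑ τ, stoppedProcess (queueExp c lam beta) (queueHit c s) (i + 1) τ ≤
      ∑ τ, stoppedProcess (queueExp c lam beta) (queueHit c s) i τ := by
  let a : Fin n := ⟨i, by omega⟩
  let unstopped (j : ℕ) (τ : Perm (Fin n)) : ℝ :=
    if queueHit c s τ ≤ i then 0 else queueExp c lam beta j τ
  have hsuper : ∑ τ, unstopped (i + 1) τ ≤ ∑ τ, unstopped i τ := by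
    refine sum_le_sum_of_sum_mul_le (nonempty_Ici (a := a)) (swap a) fun τ => ?_
    have hinv : ∀ k ∈ Ici a, queueHit c s (τ * swap a k) ≤ i ↔ queueHit c s τ ≤ i :=
      fun k hk => queueHit_mul_swap_le_iff c s τ (mem_Ici.mp hk)
    simp only [unstopped, sum_congr rfl fun k hk => if_congr (hinv k hk) rfl rfl]
    split_ifs
    · simp
    · exact sum_queueExp_succ_mul_swap_le c hc hlam hjump hbeta τ (a := a) hi
  have hsplit (τ : Perm (Fin n)) :
      stoppedProcess (queueExp c lam beta) (queueHit c s) (i + 1) τ =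
        stoppedProcess (queueExp c lam beta) (queueHit c s) i τ +
          (unstopped (i + 1) τ - unstopped i τ) := by
    rw [stoppedProcess_succ]; simp only [unstopped]; split_ifs <;> simp
  rw [sum_congr rfl fun τ _ => hsplit τ, sum_add_distrib, sum_sub_distrib]
  linarith

lemma stoppedProcess_queueExp_zero_le_one {lam : ℝ} (hlam : 0 ≤ lam) (beta s : ℝ)
    (τ : Perm (Fin n)) : stoppedProcess (queueExp c lam beta) (queueHit c s) 0 τ ≤ 1 := by
  rw [stoppedProcess_eq_of_le (i := 0) bot_le, queueExp, queueRatio, pS_zero, exp_le_one_iff]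
  simp only [Int.cast_zero, zero_add, CharP.cast_eq_zero, sub_zero, mul_zero, neg_nonpos]
  positivity

lemma exp_le_stoppedProcess_queueExp {lam beta : ℝ} (hlam : 0 ≤ lam) (hbeta : 0 ≤ beta)
    {s : ℝ} {m : ℕ} {τ : Perm (Fin n)} (h : ∃ j ≤ m, queueRatio c j τ ≤ -s) :
    exp (lam * s - lam ^ 2 * beta * m) ≤
      stoppedProcess (queueExp c lam beta) (queueHit c s) m τ := by
  have hT : queueHit c s τ ≤ m := (queueHit_le_iff c s τ m).mpr h
  obtain ⟨j, hj⟩ : ∃ j : ℕ, queueHit c s τ = j :=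
    (WithTop.ne_top_iff_exists.mp (ne_top_of_le_ne_top (WithTop.natCast_ne_top m) hT)).imp
      fun _ h => h.symm
  have hjm : (j : ℝ) ≤ m := by
    rw [hj] at hT
    exact_mod_cast WithTop.coe_le_coe.mp hT
  have huntop : (queueHit c s τ).untopA = j := by rw [hj]; rfl
  have hcross : queueRatio c j τ ≤ -s := by
    have := hittingAfter_mem_set_of_ne_top (u := queueRatio c) (s := Set.Iic (-s)) (n := 0)
      (ω := τ) (by change queueHit c s τ ≠ ⊤; simp [hj])
    change queueRatio c (queueHit c s τ).untopA τ ∈ _ at this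
    rwa [huntop] at this
  rw [stoppedProcess_eq_of_ge (i := m) hT, huntop, queueExp, exp_le_exp]
  nlinarith [mul_le_mul_of_nonneg_left hcross hlam, mul_nonneg (sq_nonneg lam) hbeta]

theorem ncard_exists_queueRatio_le_div_factorial_le (hc : ∑ x, c x = n - 1) {lam beta : ℝ}
    (hlam : 0 ≤ lam) (hjump : lam * (4 / n) ≤ 1)
    (hbeta : 8 * (∑ x, (c x : ℝ) ^ 2) / n ^ 3 ≤ beta) {m : ℕ} (hm : m ≤ n / 2) (s : ℝ) :
    ({τ : Perm (Fin n) | ∃ j ≤ m, queueRatio c j τ ≤ -s}.ncard : ℝ) / n ! ≤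
      exp (-(lam * s - lam ^ 2 * beta * m)) := by
  classical
  set Y := stoppedProcess (queueExp c lam beta) (queueHit c s)
  have hbeta0 : 0 ≤ beta := le_trans (by positivity) hbeta
  have hsum : ∑ τ, Y m τ ≤ n ! := by
    induction m with
    | zero =>
      calc ∑ τ, Y 0 τ ≤ ∑ _τ : Perm (Fin n), (1 : ℝ) :=
            sum_le_sum fun τ _ => stoppedProcess_queueExp_zero_le_one c hlam beta s τ
        _ = n ! := by simp [Fintype.card_perm]
    | succ m ih =>
      exact (sum_stoppedProcess_queueExp_succ_le c hc hlam hjump hbeta s (by omega)).trans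
        (ih (by omega))
  rw [Set.ncard_eq_toFinset_card', Set.toFinset_ofPred, div_le_iff₀ (by positivity), exp_neg,
    ← div_eq_inv_mul, le_div_iff₀ (exp_pos _)]
  calc _ = ∑ τ with ∃ j ≤ m, queueRatio c j τ ≤ -s, exp (lam * s - lam ^ 2 * beta * m) := by
        rw [sum_const, nsmul_eq_mul]
    _ ≤ ∑ τ with ∃ j ≤ m, queueRatio c j τ ≤ -s, Y m τ :=
        sum_le_sum fun τ hτ => exp_le_stoppedProcess_queueExp c hlam hbeta0 (mem_filter.mp hτ).2
    _ ≤ ∑ τ, Y m τ := sum_le_sum_of_subset_of_nonneg (filter_subset _ _) fun τ _ _ =>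
          (exp_pos _).le
    _ ≤ n ! := hsum

lemma queueRatio_le_of_pS_le {τ : Perm (Fin n)} {i : ℕ} (hi : i < n) {t : ℝ} (ht : 0 ≤ t)
    (h : (pS (c ∘ τ) i : ℝ) ≤ -(t + 1)) : queueRatio c i τ ≤ -(t / n) := by
  have hn : (0 : ℝ) < n := by exact_mod_cast (Nat.zero_le i).trans_lt hi
  have hni : (0 : ℝ) < n - i := sub_pos.mpr (by exact_mod_cast hi)
  rw [queueRatio, div_le_iff₀ hni]
  have : -(t / n) * (n - i) = -t + t * i / n := by field_simp; ring
  rw [this]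
  linarith [show 0 ≤ t * i / n by positivity]

end QueueRatio

lemma chernoff_exponent_le_neg_sq_div {n m t a Q : ℝ} (hn : 0 < n) (hm : m ≤ n / 2) (ht : 0 ≤ t)
    (hQ : a * n = Q) (hQpos : 0 < Q) :
    -(t * n / (8 * Q) * (t / n) - (t * n / (8 * Q)) ^ 2 * (8 * Q / n ^ 3) * m) ≤
      -(t ^ 2) / (8 * (3 + 2 * a) * n + 8 * t / 3) := by
  have hexp : t * n / (8 * Q) * (t / n) - (t * n / (8 * Q)) ^ 2 * (8 * Q / n ^ 3) * m =
      t ^ 2 / (8 * Q) * (1 - m / n) := by field_simp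
  have hhalf : 1 / 2 ≤ 1 - m / n := by
    have : m / n ≤ 1 / 2 := by rw [div_le_iff₀ hn]; linarith
    linarith
  have hden : 16 * Q ≤ 8 * (3 + 2 * a) * n + 8 * t / 3 := by nlinarith
  rw [hexp, neg_div, neg_le_neg_iff]
  calc t ^ 2 / (8 * (3 + 2 * a) * n + 8 * t / 3) ≤ t ^ 2 / (16 * Q) := by gcongr
    _ = t ^ 2 / (8 * Q) * (1 / 2) := by field_simp; ring
    _ ≤ _ := by gcongr

theorem stmt8_general {n : ℕ} (c : Fin n → ℕ) (hc : ∑ i, c i = n - 1)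
    (a : ℝ) (ha : a = (∑ i, (c i : ℝ) ^ 2) / n) (t : ℝ) (ht : 0 ≤ t) :
    (({τ : Equiv.Perm (Fin n) |
        ∃ i ≤ n / 2, (pS (c ∘ τ) i : ℝ) ≤ -(t + 1)}.ncard : ℝ) / (Nat.factorial n)
      ≤ Real.exp (-(t ^ 2) / (8 * (3 + 2 * a) * n + 8 * t / 3))) := by
  set E := {τ : Perm (Fin n) | ∃ i ≤ n / 2, (pS (c ∘ τ) i : ℝ) ≤ -(t + 1)}
  rcases E.eq_empty_or_nonempty with hE | ⟨τ₀, i₀, hi₀, hτ₀⟩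
  · rw [hE, Set.ncard_empty, Nat.cast_zero, zero_div]
    positivity
  have hhalf : t + 1 ≤ (n / 2 : ℕ) :=
    (add_one_le_of_pS_le hτ₀).trans (by exact_mod_cast hi₀)
  have hn : 0 < n := by
    have : 1 ≤ n / 2 := by exact_mod_cast (by linarith : (1 : ℝ) ≤ (n / 2 : ℕ))
    omega
  have hn' : (0 : ℝ) < n := by exact_mod_cast hn
  set Q := ∑ i, (c i : ℝ) ^ 2
  have hQ : (n : ℝ) - 1 ≤ Q := sub_one_le_sum_sq c hc hn
  have hhalf' : ((n / 2 : ℕ) : ℝ) ≤ n / 2 := Nat.cast_div_le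
  have hQpos : 0 < Q := by linarith
  have hsub : E ⊆ {τ | ∃ j ≤ n / 2, queueRatio c j τ ≤ -(t / n)} :=
    fun τ ⟨i, hi, hτ⟩ => ⟨i, hi, queueRatio_le_of_pS_le c (by omega) ht hτ⟩
  calc (E.ncard : ℝ) / n ! ≤ ({τ | ∃ j ≤ n / 2, queueRatio c j τ ≤ -(t / n)}.ncard : ℝ) / n ! := by
        gcongr
        exact Set.toFinite _
    _ ≤ _ := ncard_exists_queueRatio_le_div_factorial_le c hc (lam := t * n / (8 * Q))
        (by positivity) (by rw [div_mul_div_comm, div_le_one (by positivity)]; nlinarith) le_rfl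
        le_rfl (t / n)
    _ ≤ _ := exp_le_exp.mpr <| chernoff_exponent_le_neg_sq_div hn' hhalf' ht
        (by rw [ha]; field_simp) hQpos

/-- Sub-Gaussian bound on the minimum of the first half of the partial-sum walk
of a uniformly random rearrangement of a child sequence `c`: with
`a = (∑ c_i²)/n`, for all `t ≥ 0`,
`P(min_{0 ≤ i ≤ ⌊n/2⌋} S_i ≤ -(t+1)) ≤ exp(-t²/(8(3+2a)n + 8t/3))`. -/
theorem stmt8 {n : ℕ} (hn : 0 < n) (c : Fin n → ℕ) (hc : ∑ i, c i = n - 1)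
    (a : ℝ) (ha : a = (∑ i, (c i : ℝ) ^ 2) / n) (t : ℝ) (ht : 0 ≤ t) :
    (({τ : Equiv.Perm (Fin n) |
        ∃ i ≤ n / 2, (pS (c ∘ τ) i : ℝ) ≤ -(t + 1)}.ncard : ℝ) / (Nat.factorial n)
      ≤ Real.exp (-(t ^ 2) / (8 * (3 + 2 * a) * n + 8 * t / 3))) :=
  stmt8_general c hc a ha t ht
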